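/- Estimated variances of the least-squares slopes for the transformed data: let n ≥ 4 and let e₁, X̃ = (x₁, x₂, 0, …, 0) with x₂ > 0, M̃ = (m₁, m₂, m₃, 0, …, 0) with m₃ > 0, and Ỹ = (y₁, y₂, y₃, y₄, 0, …, 0) be as in the transformed mediation model. Then: (i) in the regression of M̃ on the design (e₁, X̃), the estimated variance of the slope coefficient, defined as s²·(G⁻¹)₂₂ with G the 2×2 Gram matrix of (e₁, X̃) and s² = ‖M̃ − M̃_{(e₁,X̃)}‖²/(n−2), equals m₃²/((n−2)x₂²); (ii) in the regression of Ỹ on the design (e₁, M̃, X̃), the estimated variance of the coefficient of M̃, defined as s²·(G⁻¹)_{MM} with G the 3×3 Gram matrix of (e₁, M̃, X̃) and s² = ‖Ỹ − Ỹ_{(e₁,M̃,X̃)}‖²/(n−3), equals y₄²/((n−3)m₃²). -/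

import Mathlib

/-!
The four vectors are in echelon form with respect to the standard basis `b₀, b₁, …`:
`e₁ = b₀`, `X̃` adds the new direction `b₁`, `M̃` adds `b₂` and `Ỹ` adds `b₃`. Hence the residual
of `M̃` on `(e₁, X̃)` is `m₃ b₂` and that of `Ỹ` on `(e₁, M̃, X̃)` is `y₄ b₃`, while the two Gram
determinants are `x₂²` and `x₂² m₃²`, and the cofactors of the slope entries are `1` and `x₂²`.
-/

open EuclideanSpace Submodule

variable {𝕜 ι : Type*} [RCLike 𝕜] [DecidableEq ι]

theorem EuclideanSpace.single_mem_orthogonal_span [Fintype ι] {s : Set (EuclideanSpace 𝕜 ι)}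
    {i : ι} (h : ∀ u ∈ s, u i = 0) (a : 𝕜) : single i a ∈ (span 𝕜 s)ᗮ := by
  have hs : span 𝕜 s ≤ LinearMap.ker (proj (𝕜 := 𝕜) i).toLinearMap := span_le.2 h
  refine (mem_orthogonal' _ _).2 fun u hu => ?_
  rw [inner_single_left, show u i = 0 from hs hu, mul_zero]

theorem Submodule.add_sub_starProjection_add {E : Type*} [NormedAddCommGroup E]
    [InnerProductSpace 𝕜 E] {K : Submodule 𝕜 E} [K.HasOrthogonalProjection] {p r : E}
    (hp : p ∈ K) (hr : r ∈ Kᗮ) : p + r - K.starProjection (p + r) = r := by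
  rw [K.eq_starProjection_of_mem_orthogonal' hp hr rfl, add_sub_cancel_left]

theorem Matrix.inv_apply_one_one_fin_two {K : Type*} [Field K] (A : Matrix (Fin 2) (Fin 2) K) :
    A⁻¹ 1 1 = A 0 0 / A.det := by
  rw [Matrix.inv_def, Matrix.adjugate_fin_two]
  simp [Ring.inverse_eq_inv', div_eq_inv_mul]

theorem Matrix.inv_apply_one_one_fin_three {K : Type*} [Field K]
    (A : Matrix (Fin 3) (Fin 3) K) :
    A⁻¹ 1 1 = (A 0 0 * A 2 2 - A 0 2 * A 2 0) / A.det := by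
  rw [Matrix.inv_def, Matrix.adjugate_fin_three]
  simp [Ring.inverse_eq_inv', div_eq_inv_mul]

section Echelon

variable {i j k l : ι} {x₁ x₂ m₁ m₂ m₃ : ℝ}

theorem single_add_single_mem_span_pair (hij : i ≠ j) (hx₂ : x₂ ≠ 0) (a b : ℝ) :
    single i a + single j b ∈ span ℝ {single i 1, single i x₁ + single j x₂} := by
  have h : single i a + single j b =
      (a - b / x₂ * x₁) • single i (1 : ℝ) + (b / x₂) • (single i x₁ + single j x₂) := by
    ext l
    by_cases hli : l = i
    · subst hli; simp [hij]
    by_cases hlj : l = j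
    · subst hlj; simp [hli, hx₂]
    simp [hli, hlj]
  rw [h]
  exact add_mem (smul_mem _ _ (subset_span (by simp))) (smul_mem _ _ (subset_span (by simp)))

theorem single_add_single_add_single_mem_span_triple (hij : i ≠ j) (hik : i ≠ k) (hjk : j ≠ k)
    (hx₂ : x₂ ≠ 0) (hm₃ : m₃ ≠ 0) (a b c : ℝ) :
    single i a + single j b + single k c ∈
      span ℝ {single i 1, single i m₁ + single j m₂ + single k m₃, single i x₁ + single j x₂} := by
  have h : single i a + single j b + single k c =
      (single i (a - c / m₃ * m₁) + single j (b - c / m₃ * m₂)) +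
        (c / m₃) • (single i m₁ + single j m₂ + single k m₃) := by
    ext l
    by_cases hli : l = i
    · subst hli; simp [hij, hik]
    by_cases hlj : l = j
    · subst hlj; simp [hli, hjk]
    by_cases hlk : l = k
    · subst hlk; simp [hli, hlj, hm₃]
    simp [hli, hlj, hlk]
  rw [h]
  exact add_mem (span_mono (Set.insert_subset_insert (Set.subset_insert _ _))
    (single_add_single_mem_span_pair hij hx₂ _ _)) (smul_mem _ _ (subset_span (by simp)))

variable [Fintype ι]

theorem sub_starProjection_span_pair_eq_single (hij : i ≠ j) (hik : i ≠ k) (hjk : j ≠ k)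
    (hx₂ : x₂ ≠ 0) :
    single i m₁ + single j m₂ + single k m₃ -
      (span ℝ {single i 1, single i x₁ + single j x₂}).starProjection
        (single i m₁ + single j m₂ + single k m₃) = single k m₃ :=
  add_sub_starProjection_add (single_add_single_mem_span_pair hij hx₂ m₁ m₂)
    (single_mem_orthogonal_span (by simp [hik.symm, hjk.symm]) m₃)

theorem sub_starProjection_span_triple_eq_single (hij : i ≠ j) (hik : i ≠ k) (hil : i ≠ l)
    (hjk : j ≠ k) (hjl : j ≠ l) (hkl : k ≠ l) (hx₂ : x₂ ≠ 0) (hm₃ : m₃ ≠ 0) (y₁ y₂ y₃ y₄ : ℝ) :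
    single i y₁ + single j y₂ + single k y₃ + single l y₄ -
      (span ℝ {single i 1, single i m₁ + single j m₂ + single k m₃,
        single i x₁ + single j x₂}).starProjection
        (single i y₁ + single j y₂ + single k y₃ + single l y₄) = single l y₄ :=
  add_sub_starProjection_add
    (single_add_single_add_single_mem_span_triple hij hik hjk hx₂ hm₃ y₁ y₂ y₃)
    (single_mem_orthogonal_span (by simp [hil.symm, hjl.symm, hkl.symm]) y₄)

theorem gram_pair_eq (hij : i ≠ j) :
    Matrix.gram ℝ ![single i 1, single i x₁ + single j x₂] =
      !![1, x₁; x₁, x₁ ^ 2 + x₂ ^ 2] := by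
  ext a b
  fin_cases a <;> fin_cases b <;>
    simp [Matrix.gram_apply, inner_add_left, inner_add_right, inner_single_left, hij,
      -inner_self_eq_norm_sq_to_K]
  ring

theorem gram_triple_eq (hij : i ≠ j) (hik : i ≠ k) (hjk : j ≠ k) :
    Matrix.gram ℝ ![single i 1, single i m₁ + single j m₂ + single k m₃,
      single i x₁ + single j x₂] =
      !![1, m₁, x₁;
        m₁, m₁ ^ 2 + m₂ ^ 2 + m₃ ^ 2, m₁ * x₁ + m₂ * x₂;
        x₁, m₁ * x₁ + m₂ * x₂, x₁ ^ 2 + x₂ ^ 2] := by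
  ext a b
  fin_cases a <;> fin_cases b <;>
    simp [Matrix.gram_apply, inner_add_left, inner_add_right, inner_single_left, hij, hik, hjk,
      -inner_self_eq_norm_sq_to_K] <;> ring

theorem gram_pair_inv_one_one (hij : i ≠ j) :
    (Matrix.gram ℝ ![single i 1, single i x₁ + single j x₂])⁻¹ 1 1 = (x₂ ^ 2)⁻¹ := by
  have hdet : (!![1, x₁; x₁, x₁ ^ 2 + x₂ ^ 2] : Matrix (Fin 2) (Fin 2) ℝ).det = x₂ ^ 2 := by
    rw [Matrix.det_fin_two_of]; ring
  rw [gram_pair_eq hij, Matrix.inv_apply_one_one_fin_two, hdet]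
  simp

theorem gram_triple_inv_one_one (hij : i ≠ j) (hik : i ≠ k) (hjk : j ≠ k) (hx₂ : x₂ ≠ 0) :
    (Matrix.gram ℝ ![single i 1, single i m₁ + single j m₂ + single k m₃,
      single i x₁ + single j x₂])⁻¹ 1 1 = (m₃ ^ 2)⁻¹ := by
  have hdet : (!![1, m₁, x₁;
      m₁, m₁ ^ 2 + m₂ ^ 2 + m₃ ^ 2, m₁ * x₁ + m₂ * x₂;
      x₁, m₁ * x₁ + m₂ * x₂, x₁ ^ 2 + x₂ ^ 2] : Matrix (Fin 3) (Fin 3) ℝ).det = (x₂ * m₃) ^ 2 := by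
    simp [Matrix.det_fin_three]; ring
  rw [gram_triple_eq hij hik hjk, Matrix.inv_apply_one_one_fin_three, hdet]
  simp
  field_simp
  ring

end Echelon

/-- Estimated variances of the least-squares slopes for the transformed data: for `n ≥ 4`
and the transformed vectors `e₁`, `X̃ = (x₁,x₂,0,…,0)` with `x₂ > 0`,
`M̃ = (m₁,m₂,m₃,0,…,0)` with `m₃ > 0`, `Ỹ = (y₁,y₂,y₃,y₄,0,…,0)` with `y₄ > 0`:
(i) in the regression of `M̃` on `(e₁, X̃)` the estimated variance of the slope,
`s²·(G₂⁻¹)₂₂` with `G₂` the Gram matrix of `(e₁, X̃)` and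
`s² = ‖M̃ − M̃_{(e₁,X̃)}‖²/(n−2)`, equals `m₃²/((n−2)x₂²)`;
(ii) in the regression of `Ỹ` on `(e₁, M̃, X̃)` the estimated variance of the coefficient
of `M̃`, `s²·(G₃⁻¹)_{MM}` with `G₃` the Gram matrix of `(e₁, M̃, X̃)` and
`s² = ‖Ỹ − Ỹ_{(e₁,M̃,X̃)}‖²/(n−3)`, equals `y₄²/((n−3)m₃²)`. -/
theorem estimated_variances_transformed_data
    (n : ℕ) (hn : 4 ≤ n) (x₁ x₂ m₁ m₂ m₃ y₁ y₂ y₃ y₄ : ℝ)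
    (hx₂ : 0 < x₂) (hm₃ : 0 < m₃)
    (e₁ X M Y : EuclideanSpace ℝ (Fin n))
    (he₁ : e₁ = fun i => if i = (⟨0, by omega⟩ : Fin n) then (1 : ℝ) else 0)
    (hX : X = fun i => if i = (⟨0, by omega⟩ : Fin n) then x₁
      else if i = (⟨1, by omega⟩ : Fin n) then x₂ else 0)
    (hM : M = fun i => if i = (⟨0, by omega⟩ : Fin n) then m₁
      else if i = (⟨1, by omega⟩ : Fin n) then m₂
      else if i = (⟨2, by omega⟩ : Fin n) then m₃ else 0)
    (hY : Y = fun i => if i = (⟨0, by omega⟩ : Fin n) then y₁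
      else if i = (⟨1, by omega⟩ : Fin n) then y₂
      else if i = (⟨2, by omega⟩ : Fin n) then y₃
      else if i = (⟨3, by omega⟩ : Fin n) then y₄ else 0)
    (PM PY : EuclideanSpace ℝ (Fin n))
    (hPM : PM = (Submodule.orthogonalProjectionOnto (Submodule.span ℝ {e₁, X}) M : EuclideanSpace ℝ (Fin n)))
    (hPY : PY =
      (Submodule.orthogonalProjectionOnto (Submodule.span ℝ {e₁, M, X}) Y : EuclideanSpace ℝ (Fin n)))
    (G₂ : Matrix (Fin 2) (Fin 2) ℝ) (G₃ : Matrix (Fin 3) (Fin 3) ℝ)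
    (hG₂ : G₂ = Matrix.of ![![(inner ℝ e₁ e₁ : ℝ), (inner ℝ e₁ X : ℝ)],
                            ![(inner ℝ X e₁ : ℝ), (inner ℝ X X : ℝ)]])
    (hG₃ : G₃ = Matrix.of ![![(inner ℝ e₁ e₁ : ℝ), (inner ℝ e₁ M : ℝ), (inner ℝ e₁ X : ℝ)],
                            ![(inner ℝ M e₁ : ℝ), (inner ℝ M M : ℝ), (inner ℝ M X : ℝ)],
                            ![(inner ℝ X e₁ : ℝ), (inner ℝ X M : ℝ), (inner ℝ X X : ℝ)]]) :
    (‖M - PM‖ ^ 2 / ((n : ℝ) - 2)) * (G₂⁻¹ 1 1) = m₃ ^ 2 / (((n : ℝ) - 2) * x₂ ^ 2) ∧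
    (‖Y - PY‖ ^ 2 / ((n : ℝ) - 3)) * (G₃⁻¹ 1 1) = y₄ ^ 2 / (((n : ℝ) - 3) * m₃ ^ 2) := by
  set i₀ : Fin n := ⟨0, by omega⟩
  set i₁ : Fin n := ⟨1, by omega⟩
  set i₂ : Fin n := ⟨2, by omega⟩
  set i₃ : Fin n := ⟨3, by omega⟩
  have h01 : i₀ ≠ i₁ := by simp [i₀, i₁]
  have h02 : i₀ ≠ i₂ := by simp [i₀, i₂]
  have h03 : i₀ ≠ i₃ := by simp [i₀, i₃]
  have h12 : i₁ ≠ i₂ := by simp [i₁, i₂]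
  have h13 : i₁ ≠ i₃ := by simp [i₁, i₃]
  have h23 : i₂ ≠ i₃ := by simp [i₂, i₃]
  replace hG₂ : G₂ = Matrix.gram ℝ ![e₁, X] := by
    subst hG₂; ext a b; fin_cases a <;> fin_cases b <;> rfl
  replace hG₃ : G₃ = Matrix.gram ℝ ![e₁, M, X] := by
    subst hG₃; ext a b; fin_cases a <;> fin_cases b <;> rfl
  obtain rfl : e₁ = single i₀ 1 := by ext l; simp [he₁, PiLp.single_apply]
  obtain rfl : X = single i₀ x₁ + single i₁ x₂ := by
    ext l; simp only [hX, PiLp.add_apply, PiLp.single_apply]; grind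
  obtain rfl : M = single i₀ m₁ + single i₁ m₂ + single i₂ m₃ := by
    ext l; simp only [hM, PiLp.add_apply, PiLp.single_apply]; grind
  obtain rfl : Y = single i₀ y₁ + single i₁ y₂ + single i₂ y₃ + single i₃ y₄ := by
    ext l; simp only [hY, PiLp.add_apply, PiLp.single_apply]; grind
  rw [← starProjection_apply] at hPM hPY
  subst hPM hPY hG₂ hG₃
  rw [sub_starProjection_span_pair_eq_single h01 h02 h12 hx₂.ne',
    sub_starProjection_span_triple_eq_single h01 h02 h03 h12 h13 h23 hx₂.ne' hm₃.ne',
    gram_pair_inv_one_one h01, gram_triple_inv_one_one h01 h02 h12 hx₂.ne']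
  simp only [PiLp.norm_single, Real.norm_eq_abs, sq_abs]
  constructor <;> field_simp
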